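/- arXiv:1601.04034 — 2 statements merged into one kernel-verified Lean document; each statement's English description precedes it below -/
import Mathlib

section
/- Let k ≥ 2 and ℓ ≥ 4 be integers. Let A be a (k+1)-uniform hypergraph obtained from the backbone hypergraph BH^k_ℓ by adding, for every 1 ≤ i < ℓ, a k-tight-path U_i from w_i^b to w_{i+1}^a, such that the paths U_1,…,U_{ℓ−1} are pairwise vertex-disjoint and each U_i intersects the vertex set of BH^k_ℓ exactly in the 2k vertices of the tuples w_i^b and w_{i+1}^a. Then A is a (w_1^a, w_ℓ^b, {x})-absorber: for every X' ⊆ {x} there is a k-tight-path from w_1^a to w_ℓ^b in A whose vertex set is V(A) \ X'. -/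
open MeasureTheory Finset

/-- The Bernoulli measure on `Bool` with parameter `p`. -/
noncomputable def bern (p : ℝ) : Measure Bool :=
  ENNReal.ofReal p • Measure.dirac true + ENNReal.ofReal (1 - p) • Measure.dirac false

instance bernFinite (p : ℝ) : IsFiniteMeasure (bern p) := by
  constructor
  simp only [bern, Measure.add_apply, Measure.smul_apply, smul_eq_mul, measure_univ, mul_one]
  exact ENNReal.add_lt_top.2 ⟨ENNReal.ofReal_lt_top, ENNReal.ofReal_lt_top⟩

/-- Product Bernoulli measure: independent `p`-coins indexed by `ι`. -/
noncomputable def prodBern (ι : Type*) [Fintype ι] (p : ℝ) : Measure (ι → Bool) :=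
  Measure.pi fun _ => bern p

/-- Cyclic addition on `Fin n`. -/
def rotAdd {n : ℕ} (i : Fin n) (d : ℕ) : Fin n := ⟨(i.val + d) % n, Nat.mod_lt _ i.pos⟩

/-- A (hyper)graph: a finite vertex set together with a finite set of edges. -/
structure FinHypergraph (V : Type*) where
  verts : Finset V
  edges : Finset (Finset V)

namespace FinHypergraph

variable {V W : Type*}

/-- Well-formedness: every edge is a set of vertices. -/
def Wf (H : FinHypergraph V) : Prop := ∀ e ∈ H.edges, e ⊆ H.verts

/-- Number of vertices `v(H)`. -/
def vcount (H : FinHypergraph V) : ℕ := H.verts.card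

/-- Number of edges `e(H)`. -/
def ecount (H : FinHypergraph V) : ℕ := H.edges.card

/-- `H` is `k`-uniform: every edge has exactly `k` vertices. -/
def IsUniform (k : ℕ) (H : FinHypergraph V) : Prop := ∀ e ∈ H.edges, e.card = k

/-- `H'` is a sub(hyper)graph of `H`. -/
def IsSub (H' H : FinHypergraph V) : Prop := H'.verts ⊆ H.verts ∧ H'.edges ⊆ H.edges

/-- A set of vertices is independent if it contains no edge. -/
def IsIndepSet (H : FinHypergraph V) (s : Finset V) : Prop := ∀ e ∈ H.edges, ¬ e ⊆ s

/-- `f` is an isomorphism from `F` onto `F'`. -/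
def IsIso [DecidableEq W] (f : V → W) (F : FinHypergraph V) (F' : FinHypergraph W) : Prop :=
  Set.InjOn f ↑F.verts ∧ F.verts.image f = F'.verts ∧
    F.edges.image (fun e => e.image f) = F'.edges

/-- `F'` is an `(F, x, y)`-copy inside `G`: a subgraph of `G` isomorphic to `F`
via an isomorphism sending the tuple `x` (coordinatewise) to the tuple `y`. -/
def IsCopy [DecidableEq W] (G : FinHypergraph W) (F : FinHypergraph V) {r : ℕ}
    (x : Fin r → V) (y : Fin r → W) (F' : FinHypergraph W) : Prop :=
  F'.IsSub G ∧ ∃ f : V → W, IsIso f F F' ∧ ∀ j, f (x j) = y j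

/-- The `m(F, X)`-density. -/
noncomputable def mDensity [DecidableEq V] (F : FinHypergraph V) (X : Finset V) : ℝ :=
  sSup {q : ℝ | ∃ F' : FinHypergraph V, F'.IsSub F ∧ F'.Wf ∧ 0 < F'.ecount ∧
    (X ⊆ F'.verts ∨ X ∩ F'.verts = ∅) ∧
    q = (F'.ecount : ℝ) / ((F'.vcount : ℝ) - max 1 ((F'.verts ∩ X).card : ℝ))}

/-- The `m_1`-density. -/
noncomputable def m1 [DecidableEq V] (F : FinHypergraph V) : ℝ := mDensity F ∅

/-- `H` is `k`-degenerate: there is an ordering of the vertices such that each vertex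
closes at most `k` edges lying entirely among it and earlier vertices. -/
def IsDegenerate [DecidableEq V] (k : ℕ) (H : FinHypergraph V) : Prop :=
  ∃ (h : ℕ) (v : Fin h → V), Function.Injective v ∧ Finset.univ.image v = H.verts ∧
    ∀ i : Fin h,
      (H.edges.filter (fun e => v i ∈ e ∧ ∀ u ∈ e, ∃ j : Fin h, j ≤ i ∧ v j = u)).card ≤ k

end FinHypergraph

/-- The `k`-uniform hypergraph on `[n]` determined by a boolean choice for each
`k`-element subset. -/
def hyperOf (n k : ℕ) (ω : {s : Finset (Fin n) // s.card = k} → Bool) : FinHypergraph (Fin n) where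
  verts := Finset.univ
  edges := (Finset.univ.filter (fun s : {s : Finset (Fin n) // s.card = k} => ω s = true)).image
    Subtype.val

/-- The graph on `[n]` determined by a boolean choice for each unordered pair. -/
def graphOf (n : ℕ) (ω : Sym2 (Fin n) → Bool) : FinHypergraph (Fin n) where
  verts := Finset.univ
  edges := Finset.univ.filter
    (fun s : Finset (Fin n) => ∃ u v : Fin n, u ≠ v ∧ s = {u, v} ∧ ω s(u, v) = true)

/-- The `k`-th power of a path on the `m`-tuple `u(0), …, u(m-1)`. -/
def powerPathOn {V : Type*} [DecidableEq V] (k m : ℕ) (u : ℕ → V) : FinHypergraph V where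
  verts := (Finset.range m).image u
  edges := ((Finset.range m ×ˢ Finset.range m).filter
      (fun ij => ij.1 < ij.2 ∧ ij.2 ≤ ij.1 + k)).image (fun ij => {u ij.1, u ij.2})

/-- The `(k, m)`-tight-path (a `(k+1)`-uniform hypergraph) on the tuple `u(0), …, u(m-1)`. -/
def tightPathOn {V : Type*} [DecidableEq V] (k m : ℕ) (u : ℕ → V) : FinHypergraph V where
  verts := (Finset.range m).image u
  edges := (Finset.range (m - k)).image (fun i => (Finset.Icc i (i + k)).image u)

/-- The `(k, m)`-path `P^k_m` on vertex set `{0, …, m-1}`. -/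
def powerPath (k m : ℕ) : FinHypergraph ℕ := powerPathOn k m id

/-- The `(k, m)`-tight-path `H^k_m` on vertex set `{0, …, m-1}`. -/
def tightPath (k m : ℕ) : FinHypergraph ℕ := tightPathOn k m id

/-- The `(k, m)`-connecting-path `CP^k_m` on vertex set `{0, …, m-1}`:
the `(k,m)`-path with all edges inside the first `k` or inside the last `k`
vertices removed. -/
def connPath (k m : ℕ) : FinHypergraph ℕ where
  verts := Finset.range m
  edges := ((Finset.range m ×ˢ Finset.range m).filter
      (fun ij => ij.1 < ij.2 ∧ ij.2 ≤ ij.1 + k ∧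
        ((k ≤ ij.1 ∧ ij.1 < m - k) ∨ (k ≤ ij.2 ∧ ij.2 < m - k)))).image
      (fun ij => ({ij.1, ij.2} : Finset ℕ))

/-- The `2k`-tuple consisting of the first `k` and the last `k` vertices of a path
on vertex set `{0, …, m-1}`. -/
def endsTuple (k m : ℕ) : Fin (k + k) → ℕ :=
  Fin.append (fun j : Fin k => (j : ℕ)) (fun j : Fin k => m - k + (j : ℕ))

/-- `A` is an `(a, b, X)`-absorber (with respect to the family of paths `Pfam`,
e.g. `powerPath k` or `tightPath k`): for every `X' ⊆ X` there is a path from `a`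
to `b` in `A` whose vertex set is `V(A) \ X'`. -/
def FinHypergraph.IsAbsorber {V : Type*} [DecidableEq V] (k : ℕ) (Pfam : ℕ → FinHypergraph ℕ)
    (A : FinHypergraph V) (a b : Fin k → V) (X : Finset V) : Prop :=
  ∀ X' ⊆ X, ∃ m : ℕ, 2 * k ≤ m ∧ ∃ P : FinHypergraph V,
    A.IsCopy (Pfam m) (endsTuple k m) (Fin.append a b) P ∧ P.verts = A.verts \ X'

/-- The vertex `w_{i,j}` of the backbone graph, coded as a natural number
(`x` is coded as `0`). -/
def bw (k i j : ℕ) : ℕ := 1 + (i - 1) * (2 * k) + (j - 1)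

/-- The `(2k+1)`-tuple `(w_1^a, x, w_1^b)`. -/
def bt1 (k : ℕ) : ℕ → ℕ := fun t => if t < k then bw k 1 (t + 1) else if t = k then 0 else bw k 1 t

/-- The `2k`-tuple `(w_i^a, w_i^b)`. -/
def bt2 (k i : ℕ) : ℕ → ℕ := fun t => bw k i (t + 1)

/-- The `2k`-tuple `(w_2^a, reverse of w_1^a)`. -/
def bt3 (k : ℕ) : ℕ → ℕ := fun t => if t < k then bw k 2 (t + 1) else bw k 1 (2 * k - t)

/-- The `2k`-tuple `(w_{i+2}^a, w_i^b)`. -/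
def bt4 (k i : ℕ) : ℕ → ℕ := fun t => if t < k then bw k (i + 2) (t + 1) else bw k i (t + 1)

/-- The `2k`-tuple `(reverse of w_ℓ^b, w_{ℓ-1}^b)`. -/
def bt5 (k ℓ : ℕ) : ℕ → ℕ := fun t => if t < k then bw k ℓ (2 * k - t) else bw k (ℓ - 1) (t + 1)

/-- The backbone graph `B^k_ℓ`. -/
def bbG (k ℓ : ℕ) : FinHypergraph ℕ where
  verts := Finset.range (2 * k * ℓ + 1)
  edges := (powerPathOn k (2 * k + 1) (bt1 k)).edges
    ∪ (Finset.Icc 2 ℓ).biUnion (fun i => (powerPathOn k (2 * k) (bt2 k i)).edges)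
    ∪ (powerPathOn k (2 * k) (bt3 k)).edges
    ∪ (Finset.Icc 1 (ℓ - 2)).biUnion (fun i => (powerPathOn k (2 * k) (bt4 k i)).edges)
    ∪ (powerPathOn k (2 * k) (bt5 k ℓ)).edges

/-- The backbone `(k+1)`-uniform hypergraph `BH^k_ℓ`. -/
def bbH (k ℓ : ℕ) : FinHypergraph ℕ where
  verts := Finset.range (2 * k * ℓ + 1)
  edges := (tightPathOn k (2 * k + 1) (bt1 k)).edges
    ∪ (Finset.Icc 2 ℓ).biUnion (fun i => (tightPathOn k (2 * k) (bt2 k i)).edges)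
    ∪ (tightPathOn k (2 * k) (bt3 k)).edges
    ∪ (Finset.Icc 1 (ℓ - 2)).biUnion (fun i => (tightPathOn k (2 * k) (bt4 k i)).edges)
    ∪ (tightPathOn k (2 * k) (bt5 k ℓ)).edges

/-- The `2k`-tuple `(w_i^b, w_{i+1}^a)` (ends of the tight path `U_i`). -/
def bbJoin (k i : ℕ) : Fin (k + k) → ℕ :=
  Fin.append (fun a : Fin k => bw k i (k + 1 + (a : ℕ)))
    (fun a : Fin k => bw k (i + 1) (1 + (a : ℕ)))

section AbsorberAux
open Finset

/-- Every window of length `k+1` of the first `m` entries of `u` is an edge of `A`. -/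
def GoodSeq (A : FinHypergraph ℕ) (k : ℕ) (u : ℕ → ℕ) (m : ℕ) : Prop :=
  ∀ t, t + k < m → (Finset.Icc t (t + k)).image u ∈ A.edges

/-- Glue two sequences overlapping in their last/first `k` entries. -/
def glueSeq (k m : ℕ) (u v : ℕ → ℕ) : ℕ → ℕ := fun p => if p < m then u p else v (p - m + k)

lemma mul_step (k i : ℕ) (hi : 1 ≤ i) : i * (2 * k) = (i - 1) * (2 * k) + 2 * k := by
  obtain ⟨i', rfl⟩ : ∃ i', i = i' + 1 := ⟨i - 1, by omega⟩
  simp [Nat.add_mul]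

lemma bw_lt_bw {k : ℕ} (hk : 1 ≤ k) {i i' j j' : ℕ} (hi : 1 ≤ i) (hj2 : j ≤ 2 * k)
    (hj' : 1 ≤ j') (hii : i < i') :
    bw k i j < bw k i' j' := by
  have h1 : i * (2 * k) = (i - 1) * (2 * k) + 2 * k := mul_step k i hi
  have h2 : i * (2 * k) ≤ (i' - 1) * (2 * k) := Nat.mul_le_mul_right _ (by omega)
  unfold bw; omega

lemma bw_inj {k : ℕ} (hk : 1 ≤ k) {i j i' j' : ℕ} (hi : 1 ≤ i) (hi' : 1 ≤ i')
    (hj : 1 ≤ j) (hj2 : j ≤ 2 * k) (hj' : 1 ≤ j') (hj2' : j' ≤ 2 * k)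
    (h : bw k i j = bw k i' j') : i = i' ∧ j = j' := by
  rcases lt_trichotomy i i' with hlt | rfl | hlt
  · exact absurd h (Nat.ne_of_lt (bw_lt_bw hk hi hj2 hj' hlt))
  · refine ⟨rfl, ?_⟩; unfold bw at h; omega
  · exact absurd h.symm (Nat.ne_of_lt (bw_lt_bw hk hi' hj2' hj hlt))

lemma bw_lt_bound {k : ℕ} (hk : 1 ≤ k) {i i' j : ℕ} (hi : 1 ≤ i) (hii : i ≤ i') (hj : j ≤ 2 * k) :
    bw k i j < 2 * k * i' + 1 := by
  have h1 : i * (2 * k) = (i - 1) * (2 * k) + 2 * k := mul_step k i hi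
  have h2 : i * (2 * k) ≤ i' * (2 * k) := Nat.mul_le_mul_right _ hii
  have h3 : 2 * k * i' = i' * (2 * k) := Nat.mul_comm _ _
  unfold bw
  omega

lemma bound_lt_bw (k : ℕ) {i i' j : ℕ} (hj : 1 ≤ j) (hii : i' ≤ i - 1) :
    2 * k * i' < bw k i j := by
  have h2 : i' * (2 * k) ≤ (i - 1) * (2 * k) := Nat.mul_le_mul_right _ hii
  have h3 : 2 * k * i' = i' * (2 * k) := Nat.mul_comm _ _
  unfold bw
  omega

lemma bw_img (k i : ℕ) (hi : 1 ≤ i) :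
    (range (2 * k)).image (fun t => bw k i (t + 1)) = Finset.Ioc (2 * k * (i - 1)) (2 * k * i) := by
  ext n
  have h1 : i * (2 * k) = (i - 1) * (2 * k) + 2 * k := mul_step k i hi
  have h2 : 2 * k * (i - 1) = (i - 1) * (2 * k) := Nat.mul_comm _ _
  have h3 : 2 * k * i = i * (2 * k) := Nat.mul_comm _ _
  simp only [mem_image, mem_range, Finset.mem_Ioc, bw]
  constructor
  · rintro ⟨t, ht, rfl⟩; omega
  · intro h; exact ⟨n - (i - 1) * (2 * k) - 1, by omega, by omega⟩

lemma image_sub_const (a b c : ℕ) (hca : c ≤ a) (hab : a ≤ b) :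
    (Finset.Icc a b).image (fun q => q - c) = Finset.Icc (a - c) (b - c) := by
  ext n
  simp only [mem_image, Finset.mem_Icc]
  constructor
  · rintro ⟨q, hq, rfl⟩; omega
  · intro h; exact ⟨n + c, by omega, by omega⟩

lemma image_rev_const (a b c : ℕ) (hab : a ≤ b) (hb : b ≤ c) :
    (Finset.Icc a b).image (fun q => c - q) = Finset.Icc (c - b) (c - a) := by
  ext n
  simp only [mem_image, Finset.mem_Icc]
  constructor
  · rintro ⟨q, hq, rfl⟩; omega
  · intro h; exact ⟨c - n, by omega, by omega⟩

lemma image_range_rev (m : ℕ) :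
    (range m).image (fun t => m - 1 - t) = range m := by
  ext n
  simp only [mem_image, mem_range]
  constructor
  · rintro ⟨q, hq, rfl⟩; omega
  · intro h; exact ⟨m - 1 - n, by omega, by omega⟩

lemma append_at {α : Type*} {k : ℕ} (a b : Fin k → α) (j : ℕ) (hj : j < k + k) :
    Fin.append a b ⟨j, hj⟩ = if h : j < k then a ⟨j, h⟩ else b ⟨j - k, by omega⟩ := by
  split_ifs with h
  · exact Fin.append_left a b ⟨j, h⟩
  · rw [show (⟨j, hj⟩ : Fin (k + k)) = Fin.natAdd k ⟨j - k, by omega⟩ from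
      Fin.ext (by simp [Fin.natAdd]; omega)]
    exact Fin.append_right a b _

lemma endsTuple_eval (k m j : ℕ) (hj : j < k + k) :
    endsTuple k m ⟨j, hj⟩ = if j < k then j else m - k + (j - k) := by
  unfold endsTuple
  rw [append_at]
  split_ifs <;> rfl

lemma bbJoin_eval (k i j : ℕ) (hj : j < k + k) :
    bbJoin k i ⟨j, hj⟩ = if j < k then bw k i (k + 1 + j) else bw k (i + 1) (1 + (j - k)) := by
  unfold bbJoin
  rw [append_at]
  split_ifs <;> rfl

lemma glue_step {A : FinHypergraph ℕ} {k M n : ℕ} {u v : ℕ → ℕ}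
    (hk : 1 ≤ k) (hM : 2 * k ≤ M) (hn : 2 * k ≤ n)
    (hgu : GoodSeq A k u M) (hgv : GoodSeq A k v n)
    (hui : Set.InjOn u ↑(Finset.range M)) (hvi : Set.InjOn v ↑(Finset.range n))
    (hov : ∀ j < k, u (M - k + j) = v j)
    (hdis : ∀ q, k ≤ q → q < n → v q ∉ (Finset.range M).image u) :
    ∃ w : ℕ → ℕ, (∀ p < M, w p = u p) ∧ GoodSeq A k w (M + n - k) ∧
      Set.InjOn w ↑(Finset.range (M + n - k)) ∧
      (Finset.range (M + n - k)).image w = (Finset.range M).image u ∪ (Finset.range n).image v ∧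
      (∀ j < k, w (M + n - 2 * k + j) = v (n - k + j)) := by
  refine ⟨glueSeq k M u v, fun p hp => if_pos hp, ?_, ?_, ?_, ?_⟩
  · -- GoodSeq
    intro t ht
    by_cases h : t + k < M
    · have he : (Finset.Icc t (t + k)).image (glueSeq k M u v)
          = (Finset.Icc t (t + k)).image u := by
        apply Finset.image_congr
        intro q hq
        simp only [Finset.coe_Icc, Set.mem_Icc] at hq
        exact if_pos (by omega)
      rw [he]; exact hgu t h
    · have hMk : M - k ≤ t := by omega
      have he : (Finset.Icc t (t + k)).image (glueSeq k M u v)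
          = (Finset.Icc t (t + k)).image (fun q => v (q - (M - k))) := by
        apply Finset.image_congr
        intro q hq
        simp only [Finset.coe_Icc, Set.mem_Icc] at hq
        by_cases hqM : q < M
        · rw [glueSeq, if_pos hqM]
          have := hov (q - (M - k)) (by omega)
          rw [show M - k + (q - (M - k)) = q by omega] at this
          exact this
        · rw [glueSeq, if_neg hqM]
          congr 1
          omega
      rw [he, show (fun q => v (q - (M - k))) = v ∘ (fun q => q - (M - k)) from rfl,
        ← Finset.image_image, image_sub_const _ _ _ hMk (by omega),
        show t + k - (M - k) = (t - (M - k)) + k by omega]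
      exact hgv _ (by omega)
  · -- InjOn
    intro p hp q hq h
    simp only [Finset.coe_range, Set.mem_Iio] at hp hq
    simp only [glueSeq] at h
    rcases lt_or_ge p M with h1 | h1 <;> rcases lt_or_ge q M with h2 | h2
    · rw [if_pos h1, if_pos h2] at h
      exact hui (by simpa using h1) (by simpa using h2) h
    · rw [if_pos h1, if_neg (by omega)] at h
      exact absurd (Finset.mem_image.2 ⟨p, Finset.mem_range.2 h1, h⟩)
        (hdis (q - M + k) (by omega) (by omega))
    · rw [if_neg (by omega), if_pos h2] at h
      exact absurd (Finset.mem_image.2 ⟨q, Finset.mem_range.2 h2, h.symm⟩)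
        (hdis (p - M + k) (by omega) (by omega))
    · rw [if_neg (by omega), if_neg (by omega)] at h
      have := hvi (by simp only [Finset.coe_range, Set.mem_Iio]; omega)
        (by simp only [Finset.coe_range, Set.mem_Iio]; omega) h
      omega
  · -- image
    ext x
    simp only [Finset.mem_image, Finset.mem_union, Finset.mem_range]
    constructor
    · rintro ⟨p, hp, rfl⟩
      by_cases h : p < M
      · exact Or.inl ⟨p, h, (if_pos h).symm⟩
      · exact Or.inr ⟨p - M + k, by omega, (if_neg h).symm⟩
    · rintro (⟨p, hp, rfl⟩ | ⟨q, hq, rfl⟩)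
      · exact ⟨p, by omega, if_pos hp⟩
      · by_cases h : q < k
        · exact ⟨M - k + q, by omega, by
            simp only [glueSeq]; rw [if_pos (by omega)]; exact hov q h⟩
        · exact ⟨M + q - k, by omega, by
            simp only [glueSeq]; rw [if_neg (by omega)]; congr 1; omega⟩
  · -- ends
    intro j hj
    simp only [glueSeq]
    rw [if_neg (by omega)]
    congr 1
    omega

lemma tightPath_verts (k mm : ℕ) : (tightPath k mm).verts = Finset.range mm := by
  simp [tightPath, tightPathOn]

lemma build_copy (A : FinHypergraph ℕ) (k M : ℕ) (u : ℕ → ℕ) (a b : Fin k → ℕ)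
    (hk : 1 ≤ k) (hM : 2 * k ≤ M)
    (hgood : GoodSeq A k u M) (hinj : Set.InjOn u ↑(Finset.range M))
    (hsub : (Finset.range M).image u ⊆ A.verts)
    (ha : ∀ j : Fin k, u j = a j) (hb : ∀ j : Fin k, u (M - k + j) = b j) :
    ∃ P : FinHypergraph ℕ, A.IsCopy (tightPath k M) (endsTuple k M) (Fin.append a b) P ∧
      P.verts = (Finset.range M).image u := by
  refine ⟨tightPathOn k M u, ⟨⟨hsub, ?_⟩, u, ⟨?_, ?_, ?_⟩, ?_⟩, rfl⟩
  · intro e he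
    obtain ⟨t, ht, rfl⟩ := Finset.mem_image.1 he
    exact hgood t (by have := Finset.mem_range.1 ht; omega)
  · rw [show (tightPath k M).verts = Finset.range M from tightPath_verts k M]
    exact hinj
  · rw [tightPath_verts]
    show (Finset.range M).image u = (Finset.range M).image u
    rfl
  · show ((Finset.range (M - k)).image fun i => (Finset.Icc i (i + k)).image id).image
        (fun e => e.image u) = (Finset.range (M - k)).image fun i => (Finset.Icc i (i + k)).image u
    rw [Finset.image_image]
    apply Finset.image_congr
    intro t _
    show ((Finset.Icc t (t + k)).image id).image u = (Finset.Icc t (t + k)).image u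
    rw [Finset.image_id]
  · intro j
    obtain ⟨jv, hjv⟩ := j
    rw [endsTuple_eval k M jv hjv, append_at a b jv hjv]
    split_ifs with h
    · exact ha ⟨jv, h⟩
    · exact hb ⟨jv - k, by omega⟩

lemma image_comp_rev (mm : ℕ) (g : ℕ → ℕ) :
    (range mm).image (fun t => g (mm - 1 - t)) = (range mm).image g := by
  nth_rewrite 2 [← image_range_rev mm]
  rw [Finset.image_image]
  rfl

lemma bw_img_Ico (k i a b : ℕ) :
    (Finset.Ico a b).image (fun t => bw k i (t + 1))
      = Finset.Ioc (2 * k * (i - 1) + a) (2 * k * (i - 1) + b) := by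
  ext n
  have h2 : 2 * k * (i - 1) = (i - 1) * (2 * k) := Nat.mul_comm _ _
  simp only [Finset.mem_image, Finset.mem_Ico, Finset.mem_Ioc, bw]
  constructor
  · rintro ⟨t, ht, rfl⟩; omega
  · intro h; exact ⟨n - (i - 1) * (2 * k) - 1, by omega, by omega⟩

lemma two_k_step (k i : ℕ) (hi : 1 ≤ i) : 2 * k * i = 2 * k * (i - 1) + 2 * k := by
  obtain ⟨i', rfl⟩ : ∃ i', i = i' + 1 := ⟨i - 1, by omega⟩
  rw [show i' + 1 - 1 = i' from rfl]
  ring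

end AbsorberAux
/-- **Claim 4.3 (hypergraph case).** Connecting the consecutive tuples of the backbone
hypergraph `BH^k_ℓ` by internally disjoint `k`-tight-paths yields a
`(w_1^a, w_ℓ^b, {x})`-absorber. -/
theorem backbone_hypergraph_absorber (k ℓ : ℕ) (hk : 2 ≤ k) (hℓ : 4 ≤ ℓ)
    (U : ℕ → FinHypergraph ℕ)
    (hpath : ∀ i, 1 ≤ i → i < ℓ → ∃ m : ℕ, 2 * k ≤ m ∧ ∃ f : ℕ → ℕ,
      FinHypergraph.IsIso f (tightPath k m) (U i) ∧
      ∀ j, f (endsTuple k m j) = bbJoin k i j)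
    (hdisj : ∀ i j, 1 ≤ i → i < ℓ → 1 ≤ j → j < ℓ → i ≠ j →
      ∀ v ∈ (U i).verts, v ∉ (U j).verts)
    (hmeet : ∀ i, 1 ≤ i → i < ℓ →
      (U i).verts ∩ (bbH k ℓ).verts = Finset.image (bbJoin k i) Finset.univ) :
    FinHypergraph.IsAbsorber k (tightPath k)
      ⟨(bbH k ℓ).verts ∪ (Finset.Icc 1 (ℓ - 1)).biUnion (fun i => (U i).verts),
        (bbH k ℓ).edges ∪ (Finset.Icc 1 (ℓ - 1)).biUnion (fun i => (U i).edges)⟩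
      (fun a : Fin k => bw k 1 (1 + (a : ℕ)))
      (fun a : Fin k => bw k ℓ (k + 1 + (a : ℕ)))
      {0} := by
  unfold FinHypergraph.IsAbsorber
  intro X' hX'
  set A : FinHypergraph ℕ :=
    ⟨(bbH k ℓ).verts ∪ (Finset.Icc 1 (ℓ - 1)).biUnion (fun i => (U i).verts),
      (bbH k ℓ).edges ∪ (Finset.Icc 1 (ℓ - 1)).biUnion (fun i => (U i).edges)⟩ with hA
  have hk1 : 1 ≤ k := by omega
  -- extract the path data
  have hpath' : ∀ i, ∃ (mi : ℕ) (fi : ℕ → ℕ), 1 ≤ i → i < ℓ →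
      2 * k ≤ mi ∧ FinHypergraph.IsIso fi (tightPath k mi) (U i) ∧
      ∀ j, fi (endsTuple k mi j) = bbJoin k i j := by
    intro i
    by_cases h : 1 ≤ i ∧ i < ℓ
    · obtain ⟨mi, hmi, fi, h1, h2⟩ := hpath i h.1 h.2
      exact ⟨mi, fi, fun _ _ => ⟨hmi, h1, h2⟩⟩
    · exact ⟨0, id, fun h1 h2 => absurd ⟨h1, h2⟩ h⟩
  choose m f hmf using hpath'
  have hTv : ∀ mm : ℕ, (tightPath k mm).verts = Finset.range mm := by
    intro mm; simp [tightPath, tightPathOn]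
  have hfm : ∀ i, 1 ≤ i → i ≤ ℓ - 1 → 2 * k ≤ m i := fun i h1 h2 => (hmf i h1 (by omega)).1
  have hfinj : ∀ i, 1 ≤ i → i ≤ ℓ - 1 → Set.InjOn (f i) ↑(Finset.range (m i)) := by
    intro i h1 h2
    have h3 := (hmf i h1 (by omega)).2.1.1
    rwa [hTv] at h3
  have hfimg : ∀ i, 1 ≤ i → i ≤ ℓ - 1 → (Finset.range (m i)).image (f i) = (U i).verts := by
    intro i h1 h2
    have h3 := (hmf i h1 (by omega)).2.1.2.1
    rwa [hTv] at h3
  have hfedge : ∀ i, 1 ≤ i → i ≤ ℓ - 1 → ∀ t, t + k < m i →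
      (Finset.Icc t (t + k)).image (f i) ∈ (U i).edges := by
    intro i h1 h2 t ht
    have h3 := (hmf i h1 (by omega)).2.1.2.2
    rw [← h3]
    refine Finset.mem_image.2 ⟨Finset.Icc t (t + k), ?_, rfl⟩
    exact Finset.mem_image.2 ⟨t, Finset.mem_range.2 (by omega), by simp⟩
  have hfa : ∀ i, 1 ≤ i → i ≤ ℓ - 1 → ∀ j < k, f i j = bw k i (k + 1 + j) := by
    intro i h1 h2 j hj
    have h3 := (hmf i h1 (by omega)).2.2 ⟨j, by omega⟩
    rw [endsTuple_eval k (m i) j (by omega), bbJoin_eval k i j (by omega)] at h3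
    simp only [if_pos hj] at h3
    exact h3
  have hfb : ∀ i, 1 ≤ i → i ≤ ℓ - 1 → ∀ j < k, f i (m i - k + j) = bw k (i + 1) (1 + j) := by
    intro i h1 h2 j hj
    have h3 := (hmf i h1 (by omega)).2.2 ⟨k + j, by omega⟩
    rw [endsTuple_eval k (m i) (k + j) (by omega), bbJoin_eval k i (k + j) (by omega)] at h3
    rw [if_neg (by omega), if_neg (by omega)] at h3
    rw [show k + j - k = j by omega] at h3
    exact h3
  have hfbb : ∀ i, 1 ≤ i → i ≤ ℓ - 1 → ∀ x ∈ (U i).verts, x < 2 * k * ℓ + 1 →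
      (∃ j < k, x = bw k i (k + 1 + j)) ∨ (∃ j < k, x = bw k (i + 1) (1 + j)) := by
    intro i h1 h2 x hx hxlt
    have hmem : x ∈ (U i).verts ∩ (bbH k ℓ).verts :=
      Finset.mem_inter.2 ⟨hx, Finset.mem_range.2 hxlt⟩
    rw [hmeet i h1 (by omega)] at hmem
    obtain ⟨jj, _, hjj⟩ := Finset.mem_image.1 hmem
    obtain ⟨j, hjlt⟩ := jj
    rw [bbJoin_eval k i j hjlt] at hjj
    by_cases hjk : j < k
    · rw [if_pos hjk] at hjj; exact Or.inl ⟨j, hjk, hjj.symm⟩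
    · rw [if_neg hjk] at hjj; exact Or.inr ⟨j - k, by omega, hjj.symm⟩
  have h0U : ∀ j, 1 ≤ j → j ≤ ℓ - 1 → 0 ∉ (U j).verts := by
    intro j h1 h2 h0
    have hk2 : 0 < 2 * k * ℓ + 1 := by omega
    rcases hfbb j h1 h2 0 h0 hk2 with ⟨a, ha, hae⟩ | ⟨a, ha, hae⟩ <;>
      (unfold bw at hae; omega)
  -- edge helpers
  have hbbE : (bbH k ℓ).edges ⊆ A.edges := Finset.subset_union_left
  have hUE : ∀ i, 1 ≤ i → i ≤ ℓ - 1 → (U i).edges ⊆ A.edges := by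
    intro i h1 h2 e he
    exact Finset.mem_union_right _ (Finset.mem_biUnion.2 ⟨i, Finset.mem_Icc.2 ⟨h1, h2⟩, he⟩)
  have hE1 : ∀ t, t < k + 1 → (Finset.Icc t (t + k)).image (bt1 k) ∈ A.edges := by
    intro t ht
    apply hbbE
    refine Finset.mem_union_left _ (Finset.mem_union_left _ (Finset.mem_union_left _
      (Finset.mem_union_left _ ?_)))
    exact Finset.mem_image.2 ⟨t, Finset.mem_range.2 (by omega), rfl⟩
  have hE2 : ∀ i, 2 ≤ i → i ≤ ℓ → ∀ t, t < k →
      (Finset.Icc t (t + k)).image (bt2 k i) ∈ A.edges := by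
    intro i h1 h2 t ht
    apply hbbE
    refine Finset.mem_union_left _ (Finset.mem_union_left _ (Finset.mem_union_left _
      (Finset.mem_union_right _ ?_)))
    refine Finset.mem_biUnion.2 ⟨i, Finset.mem_Icc.2 ⟨h1, h2⟩, ?_⟩
    exact Finset.mem_image.2 ⟨t, Finset.mem_range.2 (by omega), rfl⟩
  have hE3 : ∀ t, t < k → (Finset.Icc t (t + k)).image (bt3 k) ∈ A.edges := by
    intro t ht
    apply hbbE
    refine Finset.mem_union_left _ (Finset.mem_union_left _ (Finset.mem_union_right _ ?_))
    exact Finset.mem_image.2 ⟨t, Finset.mem_range.2 (by omega), rfl⟩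
  have hE4 : ∀ i, 1 ≤ i → i ≤ ℓ - 2 → ∀ t, t < k →
      (Finset.Icc t (t + k)).image (bt4 k i) ∈ A.edges := by
    intro i h1 h2 t ht
    apply hbbE
    refine Finset.mem_union_left _ (Finset.mem_union_right _ ?_)
    refine Finset.mem_biUnion.2 ⟨i, Finset.mem_Icc.2 ⟨h1, h2⟩, ?_⟩
    exact Finset.mem_image.2 ⟨t, Finset.mem_range.2 (by omega), rfl⟩
  have hE5 : ∀ t, t < k → (Finset.Icc t (t + k)).image (bt5 k ℓ) ∈ A.edges := by
    intro t ht
    apply hbbE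
    refine Finset.mem_union_right _ ?_
    exact Finset.mem_image.2 ⟨t, Finset.mem_range.2 (by omega), rfl⟩
  have Pinv : ∀ i, i ≤ ℓ - 1 → ∃ M u, 2 * k + 1 ≤ M ∧ GoodSeq A k u M ∧
      Set.InjOn u ↑(Finset.range M) ∧
      (Finset.range M).image u
        = Finset.range (2 * k * (i + 1) + 1) ∪ (Finset.Icc 1 i).biUnion (fun j => (U j).verts) ∧
      (∀ j < k, u j = bw k 1 (1 + j)) ∧
      (∀ j < k, u (M - k + j) = bw k (i + 1) (k + 1 + j)) := by
    intro i
    induction i with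
    | zero =>
      intro _
      refine ⟨2 * k + 1, bt1 k, le_refl _, fun t ht => hE1 t (by omega), ?_, ?_, ?_, ?_⟩
      · intro p hp q hq h
        simp only [Finset.coe_range, Set.mem_Iio] at hp hq
        unfold bt1 bw at h
        split_ifs at h <;> omega
      · rw [show 2 * k * (0 + 1) + 1 = 2 * k + 1 by ring, Finset.Icc_eq_empty (by omega),
          Finset.biUnion_empty, Finset.union_empty]
        ext x
        simp only [Finset.mem_image, Finset.mem_range]
        constructor
        · rintro ⟨p, hp, rfl⟩
          unfold bt1 bw
          split_ifs <;> omega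
        · intro hx
          refine ⟨if x = 0 then k else if x ≤ k then x - 1 else x, by split_ifs <;> omega, ?_⟩
          unfold bt1 bw
          split_ifs <;> omega
      · intro j hj
        unfold bt1 bw
        split_ifs <;> omega
      · intro j hj
        rw [show 2 * k + 1 - k + j = k + 1 + j by omega]
        unfold bt1 bw
        split_ifs <;> omega
    | succ i ih =>
      intro hi
      obtain ⟨M, u, hM, hgood, hinj, himg, hstart, hend⟩ := ih (by omega)
      have hi1 : 1 ≤ i + 1 := by omega
      have h2k : 2 * k ≤ m (i + 1) := hfm (i + 1) hi1 hi
      have hdis1 : ∀ q, k ≤ q → q < m (i + 1) →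
          f (i + 1) q ∉ (Finset.range M).image u := by
        intro q hq1 hq2 hmem
        rw [himg] at hmem
        have hUv : f (i + 1) q ∈ (U (i + 1)).verts := by
          rw [← hfimg (i + 1) hi1 hi]
          exact Finset.mem_image.2 ⟨q, Finset.mem_range.2 hq2, rfl⟩
        rcases Finset.mem_union.1 hmem with hm1 | hm2
        · have hlt : f (i + 1) q < 2 * k * (i + 1) + 1 := Finset.mem_range.1 hm1
          have hltl : f (i + 1) q < 2 * k * ℓ + 1 := by
            have hmono : 2 * k * (i + 1) ≤ 2 * k * ℓ := Nat.mul_le_mul_left _ (by omega)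
            omega
          rcases hfbb (i + 1) hi1 hi _ hUv hltl with ⟨j, hj, hje⟩ | ⟨j, hj, hje⟩
          · rw [← hfa (i + 1) hi1 hi j hj] at hje
            have heq := hfinj (i + 1) hi1 hi (by simpa using hq2)
              (by simpa using (by omega : j < m (i + 1))) hje
            omega
          · have hb2 : 2 * k * (i + 1) < bw k (i + 1 + 1) (1 + j) :=
              bound_lt_bw k (by omega) (by omega)
            rw [hje] at hlt
            omega
        · obtain ⟨j, hjIcc, hjv⟩ := Finset.mem_biUnion.1 hm2
          rw [Finset.mem_Icc] at hjIcc
          exact hdisj (i + 1) j (by omega) (by omega) (by omega) (by omega) (by omega) _ hUv hjv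
      obtain ⟨w, hwl, hwg, hwi, hwim, hwe⟩ := glue_step (A := A) hk1 (by omega) h2k hgood
        (fun t ht => hUE (i + 1) hi1 hi (hfedge (i + 1) hi1 hi t ht))
        hinj (hfinj (i + 1) hi1 hi)
        (fun j hj => by rw [hend j hj, hfa (i + 1) hi1 hi j hj]) hdis1
      set M1 := M + m (i + 1) - k with hM1
      have hwend : ∀ j < k, w (M1 - k + j) = bt2 k (i + 1 + 1) j := by
        intro j hj
        rw [show M1 - k + j = M + m (i + 1) - 2 * k + j by omega]
        rw [hwe j hj, hfb (i + 1) hi1 hi j hj]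
        unfold bt2 bw
        omega
      have hv2inj : Set.InjOn (bt2 k (i + 1 + 1)) ↑(Finset.range (2 * k)) := by
        intro a ha b hb h
        unfold bt2 bw at h
        omega
      have hdis2 : ∀ q, k ≤ q → q < 2 * k → bt2 k (i + 1 + 1) q ∉ (Finset.range M1).image w := by
        intro q hq1 hq2 hmem
        rw [hwim, himg] at hmem
        have hval : bt2 k (i + 1 + 1) q = bw k (i + 1 + 1) (q + 1) := rfl
        have hvlt : bt2 k (i + 1 + 1) q < 2 * k * ℓ + 1 := by
          rw [hval]; exact bw_lt_bound hk1 (by omega) (by omega) (by omega)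
        rcases Finset.mem_union.1 hmem with hm0 | hm2
        · rcases Finset.mem_union.1 hm0 with hm1 | hmU
          · have h1 := Finset.mem_range.1 hm1
            have h2 : 2 * k * (i + 1) < bw k (i + 1 + 1) (q + 1) :=
              bound_lt_bw k (by omega) (by omega)
            rw [hval] at h1
            omega
          · obtain ⟨j, hjIcc, hjv⟩ := Finset.mem_biUnion.1 hmU
            rw [Finset.mem_Icc] at hjIcc
            rw [hval] at hjv hvlt
            rcases hfbb j (by omega) (by omega) _ hjv hvlt with ⟨a, ha, hae⟩ | ⟨a, ha, hae⟩
            · have := bw_inj hk1 (by omega) (by omega) (by omega) (by omega) (by omega)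
                (by omega) hae
              omega
            · have := bw_inj hk1 (by omega) (by omega) (by omega) (by omega) (by omega)
                (by omega) hae
              omega
        · have hUv : bt2 k (i + 1 + 1) q ∈ (U (i + 1)).verts := by
            rw [← hfimg (i + 1) hi1 hi]; exact hm2
          rw [hval] at hUv hvlt
          rcases hfbb (i + 1) hi1 hi _ hUv hvlt with ⟨a, ha, hae⟩ | ⟨a, ha, hae⟩
          · have := bw_inj hk1 (by omega) (by omega) (by omega) (by omega) (by omega)
              (by omega) hae
            omega
          · have := bw_inj hk1 (by omega) (by omega) (by omega) (by omega) (by omega)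
              (by omega) hae
            omega
      have hv2good : GoodSeq A k (bt2 k (i + 1 + 1)) (2 * k) := by
        intro t ht
        exact hE2 (i + 1 + 1) (by omega) (by omega) t (by omega)
      obtain ⟨w2, hw2l, hw2g, hw2i, hw2im, hw2e⟩ := glue_step (A := A) hk1
        (show 2 * k ≤ M1 by omega) (le_refl (2 * k)) hwg hv2good hwi hv2inj hwend hdis2
      refine ⟨M1 + 2 * k - k, w2, by omega, hw2g, hw2i, ?_, ?_, ?_⟩
      · rw [hw2im, hwim, himg, hfimg (i + 1) hi1 hi]
        have hbt2img : (Finset.range (2 * k)).image (bt2 k (i + 1 + 1))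
            = Finset.Ioc (2 * k * (i + 1) + 0) (2 * k * (i + 1) + 2 * k) := by
          rw [Finset.range_eq_Ico]
          exact bw_img_Ico k (i + 1 + 1) 0 (2 * k)
        have hBsucc : (Finset.Icc 1 (i + 1)).biUnion (fun j => (U j).verts)
            = (Finset.Icc 1 i).biUnion (fun j => (U j).verts) ∪ (U (i + 1)).verts := by
          rw [show Finset.Icc 1 (i + 1) = insert (i + 1) (Finset.Icc 1 i) from by
            ext x; simp only [Finset.mem_Icc, Finset.mem_insert]; omega,
            Finset.biUnion_insert, Finset.union_comm]
        rw [hbt2img, hBsucc]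
        have hstep : 2 * k * (i + 1 + 1) = 2 * k * (i + 1) + 2 * k := by ring
        ext x
        simp only [Finset.mem_union, Finset.mem_range, Finset.mem_Ioc]
        constructor
        · rintro (((h | h) | h) | h)
          · exact Or.inl (by omega)
          · exact Or.inr (Or.inl h)
          · exact Or.inr (Or.inr h)
          · exact Or.inl (by omega)
        · rintro (h | (h | h))
          · by_cases hx : x < 2 * k * (i + 1) + 1
            · exact Or.inl (Or.inl (Or.inl hx))
            · exact Or.inr (by omega)
          · exact Or.inl (Or.inl (Or.inr h))
          · exact Or.inl (Or.inr h)
      · intro j hj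
        rw [hw2l j (by omega), hwl j (by omega)]
        exact hstart j hj
      · intro j hj
        rw [show M1 + 2 * k - k - k + j = M1 + 2 * k - 2 * k + j by omega, hw2e j hj]
        show bt2 k (i + 1 + 1) (2 * k - k + j) = bw k (i + 1 + 1) (k + 1 + j)
        unfold bt2 bw
        omega
  -- reversed-block facts
  have hggood : ∀ ii, 1 ≤ ii → ii ≤ ℓ - 1 →
      GoodSeq A k (fun t => f ii (m ii - 1 - t)) (m ii) := by
    intro ii h1 h2 t ht
    have h3 : (Finset.Icc t (t + k)).image (fun q => f ii (m ii - 1 - q))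
        = ((Finset.Icc t (t + k)).image (fun q => m ii - 1 - q)).image (f ii) := by
      rw [Finset.image_image]; rfl
    rw [h3, image_rev_const t (t + k) (m ii - 1) (by omega) (by omega),
      show m ii - 1 - t = (m ii - 1 - (t + k)) + k by omega]
    exact hUE ii h1 h2 (hfedge ii h1 h2 _ (by omega))
  have hginj : ∀ ii, 1 ≤ ii → ii ≤ ℓ - 1 →
      Set.InjOn (fun t => f ii (m ii - 1 - t)) ↑(Finset.range (m ii)) := by
    intro ii h1 h2 a1 ha1 b1 hb1 h
    simp only [Finset.coe_range, Set.mem_Iio] at ha1 hb1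
    have := hfinj ii h1 h2 (by simpa using (by omega : m ii - 1 - a1 < m ii))
      (by simpa using (by omega : m ii - 1 - b1 < m ii)) h
    omega
  have hgimg : ∀ ii, 1 ≤ ii → ii ≤ ℓ - 1 →
      (Finset.range (m ii)).image (fun t => f ii (m ii - 1 - t)) = (U ii).verts := by
    intro ii h1 h2
    rw [image_comp_rev (m ii) (f ii)]
    exact hfimg ii h1 h2
  have hga : ∀ ii, 1 ≤ ii → ii ≤ ℓ - 1 → ∀ j < k,
      f ii (m ii - 1 - j) = bw k (ii + 1) (k - j) := by
    intro ii h1 h2 j hj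
    have hm2 := hfm ii h1 h2
    rw [show m ii - 1 - j = m ii - k + (k - 1 - j) by omega,
      hfb ii h1 h2 (k - 1 - j) (by omega), show 1 + (k - 1 - j) = k - j by omega]
  have hgb : ∀ ii, 1 ≤ ii → ii ≤ ℓ - 1 → ∀ j < k,
      f ii (m ii - 1 - (m ii - k + j)) = bw k ii (2 * k - j) := by
    intro ii h1 h2 j hj
    have hm2 := hfm ii h1 h2
    rw [show m ii - 1 - (m ii - k + j) = k - 1 - j by omega,
      hfa ii h1 h2 (k - 1 - j) (by omega), show k + 1 + (k - 1 - j) = 2 * k - j by omega]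
  have Qinv : ∀ i, 1 ≤ i → i ≤ ℓ - 1 → ∃ M u, 2 * k ≤ M ∧ GoodSeq A k u M ∧
      Set.InjOn u ↑(Finset.range M) ∧
      (Finset.range M).image u
        = (Finset.range (2 * k * i + k + 1) \ {0})
            ∪ (Finset.Icc 1 i).biUnion (fun j => (U j).verts) ∧
      (∀ j < k, u j = bw k 1 (1 + j)) ∧
      (∀ j < k, u (M - k + j) = bw k i (2 * k - j)) := by
    intro i hi1
    induction i, hi1 using Nat.le_induction with
    | base =>
      intro _
      have hm1 : 2 * k ≤ m 1 := hfm 1 (by omega) (by omega)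
      have hvalb1 : ∀ b, 1 ≤ b → bw k 1 b = b := by
        intro b hb
        unfold bw
        rw [show (1 - 1) * (2 * k) = 0 by norm_num]
        omega
      have hvalb2 : ∀ b, 1 ≤ b → bw k (1 + 1) b = 2 * k + b := by
        intro b hb
        unfold bw
        rw [show (1 + 1 - 1) * (2 * k) = 2 * k by norm_num]
        omega
      have hu0good : GoodSeq A k (fun t => bt3 k (2 * k - 1 - t)) (2 * k) := by
        intro t ht
        have h3 : (Finset.Icc t (t + k)).image (fun q => bt3 k (2 * k - 1 - q))
            = ((Finset.Icc t (t + k)).image (fun q => 2 * k - 1 - q)).image (bt3 k) := by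
          rw [Finset.image_image]; rfl
        rw [h3, image_rev_const t (t + k) (2 * k - 1) (by omega) (by omega),
          show 2 * k - 1 - t = (2 * k - 1 - (t + k)) + k by omega]
        exact hE3 _ (by omega)
      have hu0inj : Set.InjOn (fun t => bt3 k (2 * k - 1 - t)) ↑(Finset.range (2 * k)) := by
        intro a ha b hb h
        simp only [Finset.coe_range, Set.mem_Iio] at ha hb
        simp only [bt3] at h
        unfold bw at h
        split_ifs at h <;> omega
      have hu0mem : ∀ x, x ∈ (Finset.range (2 * k)).image (fun t => bt3 k (2 * k - 1 - t)) ↔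
          ((1 ≤ x ∧ x ≤ k) ∨ (2 * k + 1 ≤ x ∧ x ≤ 3 * k)) := by
        intro x
        rw [image_comp_rev]
        simp only [Finset.mem_image, Finset.mem_range]
        constructor
        · rintro ⟨t, ht, rfl⟩
          unfold bt3 bw
          split_ifs <;> omega
        · intro h
          refine ⟨if x ≤ k then 2 * k - x else x - 2 * k - 1, by split_ifs <;> omega, ?_⟩
          unfold bt3 bw
          split_ifs <;> omega
      have hw1b : ∀ x, k + 1 ≤ x → x ≤ 2 * k → x ∈ (U 1).verts := by
        intro x h1 h2
        rw [← hfimg 1 (by omega) (by omega)]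
        refine Finset.mem_image.2 ⟨x - k - 1, Finset.mem_range.2 (by omega), ?_⟩
        rw [hfa 1 (by omega) (by omega) (x - k - 1) (by omega), hvalb1 _ (by omega)]
        omega
      have hdisB : ∀ q, k ≤ q → q < m 1 →
          f 1 (m 1 - 1 - q) ∉ (Finset.range (2 * k)).image (fun t => bt3 k (2 * k - 1 - t)) := by
        intro q hq1 hq2 hmem
        rw [hu0mem] at hmem
        have hUv : f 1 (m 1 - 1 - q) ∈ (U 1).verts := by
          rw [← hfimg 1 (by omega) (by omega)]
          exact Finset.mem_image.2 ⟨m 1 - 1 - q, Finset.mem_range.2 (by omega), rfl⟩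
        have hlt : f 1 (m 1 - 1 - q) < 2 * k * ℓ + 1 := by
          have h8 : 2 * k * 4 ≤ 2 * k * ℓ := Nat.mul_le_mul_left _ hℓ
          have h9 : 2 * k * 4 = 8 * k := by ring
          omega
        rcases hfbb 1 (by omega) (by omega) _ hUv hlt with ⟨a, ha, hae⟩ | ⟨a, ha, hae⟩
        · rw [hvalb1 _ (by omega)] at hae
          omega
        · rw [← hfb 1 (by omega) (by omega) a ha] at hae
          have := hfinj 1 (by omega) (by omega)
            (by simpa using (by omega : m 1 - 1 - q < m 1))
            (by simpa using (by omega : m 1 - k + a < m 1)) hae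
          omega
      obtain ⟨w, hwl, hwg, hwi, hwim, hwe⟩ := glue_step (A := A) hk1 (le_refl (2 * k)) hm1
        hu0good (hggood 1 (by omega) (by omega)) hu0inj (hginj 1 (by omega) (by omega))
        (fun j hj => by
          show bt3 k (2 * k - 1 - (2 * k - k + j)) = f 1 (m 1 - 1 - j)
          rw [hga 1 (by omega) (by omega) j hj]
          unfold bt3 bw
          split_ifs <;> omega) hdisB
      refine ⟨2 * k + m 1 - k, w, by omega, hwg, hwi, ?_, ?_, ?_⟩
      · rw [hwim, hgimg 1 (by omega) (by omega),
          show Finset.Icc 1 1 = {1} from Finset.Icc_self 1, Finset.singleton_biUnion]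
        have h41 : 2 * k * 1 = 2 * k := by ring
        ext x
        simp only [Finset.mem_union, Finset.mem_sdiff, Finset.mem_range, Finset.mem_singleton]
        rw [hu0mem x]
        constructor
        · rintro ((⟨h1, h2⟩ | ⟨h1, h2⟩) | h)
          · exact Or.inl ⟨by omega, by omega⟩
          · exact Or.inl ⟨by omega, by omega⟩
          · exact Or.inr h
        · rintro (⟨h1, h2⟩ | h)
          · by_cases hxk : x ≤ k
            · exact Or.inl (Or.inl ⟨by omega, hxk⟩)
            · by_cases hx2k : x ≤ 2 * k
              · exact Or.inr (hw1b x (by omega) hx2k)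
              · exact Or.inl (Or.inr ⟨by omega, by omega⟩)
          · exact Or.inr h
      · intro j hj
        rw [hwl j (by omega)]
        show bt3 k (2 * k - 1 - j) = bw k 1 (1 + j)
        unfold bt3 bw
        split_ifs <;> omega
      · intro j hj
        rw [show 2 * k + m 1 - k - k + j = 2 * k + m 1 - 2 * k + j by omega, hwe j hj]
        exact hgb 1 (by omega) (by omega) j hj
    | succ i hi1 ih =>
      intro hi2
      obtain ⟨M, u, hM, hgood, hinj, himg, hstart, hend⟩ := ih (by omega)
      have hi2' : i + 1 ≤ ℓ - 1 := hi2
      have h2k : 2 * k ≤ m (i + 1) := hfm (i + 1) (by omega) hi2'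
      have hval2 : ∀ b, 1 ≤ b → bw k (i + 2) b = 2 * k * (i + 1) + b := by
        intro b hb
        unfold bw
        rw [show i + 2 - 1 = i + 1 from rfl]
        have hc : (i + 1) * (2 * k) = 2 * k * (i + 1) := Nat.mul_comm _ _
        omega
      have hval2' : ∀ b, 1 ≤ b → bw k (i + 1 + 1) b = 2 * k * (i + 1) + b := hval2
      have hval1 : ∀ b, 1 ≤ b → bw k (i + 1) b = 2 * k * i + b := by
        intro b hb
        unfold bw
        rw [show i + 1 - 1 = i from rfl]
        have hc : i * (2 * k) = 2 * k * i := Nat.mul_comm _ _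
        omega
      have hval0 : ∀ b, 1 ≤ b → bw k i b = 2 * k * (i - 1) + b := by
        intro b hb
        unfold bw
        have hc : (i - 1) * (2 * k) = 2 * k * (i - 1) := Nat.mul_comm _ _
        omega
      have hstep0 : 2 * k * i = 2 * k * (i - 1) + 2 * k := two_k_step k i (by omega)
      have hstep1 : 2 * k * (i + 1) = 2 * k * i + 2 * k := by ring
      have hv4good : GoodSeq A k (fun t => bt4 k i (2 * k - 1 - t)) (2 * k) := by
        intro t ht
        have h3 : (Finset.Icc t (t + k)).image (fun q => bt4 k i (2 * k - 1 - q))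
            = ((Finset.Icc t (t + k)).image (fun q => 2 * k - 1 - q)).image (bt4 k i) := by
          rw [Finset.image_image]; rfl
        rw [h3, image_rev_const t (t + k) (2 * k - 1) (by omega) (by omega),
          show 2 * k - 1 - t = (2 * k - 1 - (t + k)) + k by omega]
        exact hE4 i (by omega) (by omega) _ (by omega)
      have hv4inj : Set.InjOn (fun t => bt4 k i (2 * k - 1 - t)) ↑(Finset.range (2 * k)) := by
        intro a ha b hb h
        simp only [Finset.coe_range, Set.mem_Iio] at ha hb
        simp only [bt4] at h
        split_ifs at h with hc1 hc2 hc2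
        · rw [hval2 _ (by omega), hval2 _ (by omega)] at h
          omega
        · have := bw_inj hk1 (by omega) (by omega) (by omega) (by omega) (by omega) (by omega) h
          omega
        · have := bw_inj hk1 (by omega) (by omega) (by omega) (by omega) (by omega) (by omega) h
          omega
        · rw [hval0 _ (by omega), hval0 _ (by omega)] at h
          omega
      have hv4img : ∀ x, x ∈ (Finset.range (2 * k)).image (bt4 k i) ↔
          ((2 * k * (i + 1) + 1 ≤ x ∧ x ≤ 2 * k * (i + 1) + k)
            ∨ (2 * k * (i - 1) + k + 1 ≤ x ∧ x ≤ 2 * k * (i - 1) + 2 * k)) := by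
        intro x
        simp only [Finset.mem_image, Finset.mem_range]
        constructor
        · rintro ⟨t, ht, rfl⟩
          by_cases htk : t < k
          · rw [show bt4 k i t = bw k (i + 2) (t + 1) from by unfold bt4; rw [if_pos htk],
              hval2 _ (by omega)]
            left; omega
          · rw [show bt4 k i t = bw k i (t + 1) from by unfold bt4; rw [if_neg htk],
              hval0 _ (by omega)]
            right; omega
        · rintro (⟨h1, h2⟩ | ⟨h1, h2⟩)
          · refine ⟨x - 2 * k * (i + 1) - 1, by omega, ?_⟩
            rw [show bt4 k i (x - 2 * k * (i + 1) - 1)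
                = bw k (i + 2) (x - 2 * k * (i + 1) - 1 + 1)
              from by unfold bt4; rw [if_pos (by omega)], hval2 _ (by omega)]
            omega
          · refine ⟨x - 2 * k * (i - 1) - 1, by omega, ?_⟩
            rw [show bt4 k i (x - 2 * k * (i - 1) - 1)
                = bw k i (x - 2 * k * (i - 1) - 1 + 1)
              from by unfold bt4; rw [if_neg (by omega)], hval0 _ (by omega)]
            omega
      have hdis4 : ∀ q, k ≤ q → q < 2 * k →
          (fun t => bt4 k i (2 * k - 1 - t)) q ∉ (Finset.range M).image u := by
        intro q hq1 hq2 hmem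
        rw [himg] at hmem
        have hval : (fun t => bt4 k i (2 * k - 1 - t)) q = bw k (i + 2) (2 * k - q) := by
          show bt4 k i (2 * k - 1 - q) = _
          unfold bt4
          rw [if_pos (by omega)]
          congr 1
          omega
        rw [hval] at hmem
        rcases Finset.mem_union.1 hmem with hm1 | hm2
        · have h1 := Finset.mem_range.1 (Finset.mem_sdiff.1 hm1).1
          rw [hval2 _ (by omega)] at h1
          omega
        · obtain ⟨j, hjIcc, hjv⟩ := Finset.mem_biUnion.1 hm2
          rw [Finset.mem_Icc] at hjIcc
          have hvlt : bw k (i + 2) (2 * k - q) < 2 * k * ℓ + 1 :=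
            bw_lt_bound hk1 (by omega) (by omega) (by omega)
          rcases hfbb j (by omega) (by omega) _ hjv hvlt with ⟨a, ha, hae⟩ | ⟨a, ha, hae⟩
          · have := bw_inj hk1 (by omega) (by omega) (by omega) (by omega) (by omega)
              (by omega) hae
            omega
          · have := bw_inj hk1 (by omega) (by omega) (by omega) (by omega) (by omega)
              (by omega) hae
            omega
      obtain ⟨w, hwl, hwg, hwi, hwim, hwe⟩ := glue_step (A := A) hk1 hM (le_refl (2 * k))
        hgood hv4good hinj hv4inj
        (fun j hj => by
          rw [hend j hj]
          show bw k i (2 * k - j) = bt4 k i (2 * k - 1 - j)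
          unfold bt4
          rw [if_neg (by omega)]
          congr 1
          omega) hdis4
      have hwend : ∀ j < k, w (M + 2 * k - k - k + j) = bw k (i + 2) (k - j) := by
        intro j hj
        rw [show M + 2 * k - k - k + j = M + 2 * k - 2 * k + j by omega, hwe j hj]
        show bt4 k i (2 * k - 1 - (2 * k - k + j)) = _
        unfold bt4
        rw [if_pos (by omega)]
        congr 1
        omega
      have hdis5 : ∀ q, k ≤ q → q < m (i + 1) →
          (fun t => f (i + 1) (m (i + 1) - 1 - t)) q
            ∉ (Finset.range (M + 2 * k - k)).image w := by
        intro q hq1 hq2 hmem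
        simp only [] at hmem
        rw [hwim, himg] at hmem
        have hUv : f (i + 1) (m (i + 1) - 1 - q) ∈ (U (i + 1)).verts := by
          rw [← hfimg (i + 1) (by omega) hi2']
          exact Finset.mem_image.2 ⟨m (i + 1) - 1 - q, Finset.mem_range.2 (by omega), rfl⟩
        rcases Finset.mem_union.1 hmem with hm0 | hmV
        · rcases Finset.mem_union.1 hm0 with hm1 | hmB
          · have h1 := Finset.mem_range.1 (Finset.mem_sdiff.1 hm1).1
            have hvlt : f (i + 1) (m (i + 1) - 1 - q) < 2 * k * ℓ + 1 := by
              have h7 : 2 * k * (i + 1) ≤ 2 * k * ℓ := Nat.mul_le_mul_left _ (by omega)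
              omega
            rcases hfbb (i + 1) (by omega) hi2' _ hUv hvlt with ⟨a, ha, hae⟩ | ⟨a, ha, hae⟩
            · rw [hval1 _ (by omega)] at hae
              omega
            · rw [hval2' _ (by omega)] at hae
              omega
          · obtain ⟨j, hjIcc, hjv⟩ := Finset.mem_biUnion.1 hmB
            rw [Finset.mem_Icc] at hjIcc
            exact hdisj (i + 1) j (by omega) (by omega) (by omega) (by omega) (by omega) _ hUv hjv
        · rw [image_comp_rev] at hmV
          have hvlt : f (i + 1) (m (i + 1) - 1 - q) < 2 * k * ℓ + 1 := by
            rcases (hv4img _).1 hmV with ⟨h1, h2⟩ | ⟨h1, h2⟩ <;>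
              · have h7 : 2 * k * (i + 2) ≤ 2 * k * ℓ := Nat.mul_le_mul_left _ (by omega)
                have h8 : 2 * k * (i - 1) ≤ 2 * k * ℓ := Nat.mul_le_mul_left _ (by omega)
                have h9 : 2 * k * (i + 2) = 2 * k * (i + 1) + 2 * k := by ring
                omega
          rcases hfbb (i + 1) (by omega) hi2' _ hUv hvlt with ⟨a, ha, hae⟩ | ⟨a, ha, hae⟩
          · rcases (hv4img _).1 hmV with ⟨h1, h2⟩ | ⟨h1, h2⟩ <;>
              · rw [hval1 _ (by omega)] at hae
                omega
          · rw [← hfb (i + 1) (by omega) hi2' a ha] at hae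
            have := hfinj (i + 1) (by omega) hi2'
              (by simpa using (by omega : m (i + 1) - 1 - q < m (i + 1)))
              (by simpa using (by omega : m (i + 1) - k + a < m (i + 1))) hae
            omega
      obtain ⟨w2, hw2l, hw2g, hw2i, hw2im, hw2e⟩ := glue_step (A := A) hk1
        (show 2 * k ≤ M + 2 * k - k by omega) h2k hwg
        (hggood (i + 1) (by omega) hi2') hwi (hginj (i + 1) (by omega) hi2')
        (fun j hj => by
          rw [hwend j hj]
          exact (hga (i + 1) (by omega) hi2' j hj).symm) hdis5
      refine ⟨M + 2 * k - k + m (i + 1) - k, w2, by omega, hw2g, hw2i, ?_, ?_, ?_⟩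
      · rw [hw2im, hwim, himg, hgimg (i + 1) (by omega) hi2', image_comp_rev]
        have hwb : ∀ x, 2 * k * i + k + 1 ≤ x → x ≤ 2 * k * (i + 1) →
            x ∈ (U (i + 1)).verts := by
          intro x h1 h2
          rw [← hfimg (i + 1) (by omega) hi2']
          refine Finset.mem_image.2 ⟨x - 2 * k * i - k - 1, Finset.mem_range.2 (by omega), ?_⟩
          rw [hfa (i + 1) (by omega) hi2' (x - 2 * k * i - k - 1) (by omega),
            hval1 _ (by omega)]
          omega
        have hBsucc : (Finset.Icc 1 (i + 1)).biUnion (fun j => (U j).verts)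
            = (Finset.Icc 1 i).biUnion (fun j => (U j).verts) ∪ (U (i + 1)).verts := by
          rw [show Finset.Icc 1 (i + 1) = insert (i + 1) (Finset.Icc 1 i) from by
            ext x; simp only [Finset.mem_Icc, Finset.mem_insert]; omega,
            Finset.biUnion_insert, Finset.union_comm]
        rw [hBsucc]
        ext x
        simp only [Finset.mem_union, Finset.mem_sdiff, Finset.mem_range, Finset.mem_singleton]
        rw [hv4img x]
        constructor
        · rintro (((⟨h1, h2⟩ | h) | (⟨h1, h2⟩ | ⟨h1, h2⟩)) | h)
          · exact Or.inl ⟨by omega, h2⟩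
          · exact Or.inr (Or.inl h)
          · exact Or.inl ⟨by omega, by omega⟩
          · exact Or.inl ⟨by omega, by omega⟩
          · exact Or.inr (Or.inr h)
        · rintro (⟨h1, h2⟩ | (h | h))
          · by_cases hc1 : x < 2 * k * i + k + 1
            · exact Or.inl (Or.inl (Or.inl ⟨hc1, h2⟩))
            · by_cases hc2 : x ≤ 2 * k * (i + 1)
              · exact Or.inr (hwb x (by omega) hc2)
              · exact Or.inl (Or.inr (Or.inl ⟨by omega, by omega⟩))
          · exact Or.inl (Or.inl (Or.inr h))
          · exact Or.inr h
      · intro j hj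
        rw [hw2l j (by omega), hwl j (by omega)]
        exact hstart j hj
      · intro j hj
        rw [show M + 2 * k - k + m (i + 1) - k - k + j
            = M + 2 * k - k + m (i + 1) - 2 * k + j by omega, hw2e j hj]
        exact hgb (i + 1) (by omega) hi2' j hj


  rcases Finset.subset_singleton_iff.1 hX' with rfl | rfl
  · -- X' = ∅ : use the path through x
    obtain ⟨M, u, hM, hgood, hinj, himg, hstart, hend⟩ := Pinv (ℓ - 1) (le_refl _)
    rw [show ℓ - 1 + 1 = ℓ by omega] at himg hend
    have hAv : A.verts = Finset.range (2 * k * ℓ + 1)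
        ∪ (Finset.Icc 1 (ℓ - 1)).biUnion (fun i => (U i).verts) := rfl
    obtain ⟨P, hc, hv⟩ := build_copy A k M u
      (fun a : Fin k => bw k 1 (1 + (a : ℕ))) (fun a : Fin k => bw k ℓ (k + 1 + (a : ℕ)))
      hk1 (by omega) hgood hinj
      (by rw [himg, ← hAv])
      (fun j => hstart j j.isLt) (fun j => hend j j.isLt)
    exact ⟨M, by omega, P, hc, by rw [hv, himg, ← hAv, Finset.sdiff_empty]⟩
  · -- X' = {0} : use the reversed path avoiding x
    obtain ⟨M, u, hM, hgood, hinj, himg, hstart, hend⟩ := Qinv (ℓ - 1) (by omega) (le_refl _)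
    have hvalL : ∀ b, 1 ≤ b → bw k ℓ b = 2 * k * (ℓ - 1) + b := by
      intro b hb
      unfold bw
      have hc : (ℓ - 1) * (2 * k) = 2 * k * (ℓ - 1) := Nat.mul_comm _ _
      omega
    have hvalL1 : ∀ b, 1 ≤ b → bw k (ℓ - 1) b = 2 * k * (ℓ - 2) + b := by
      intro b hb
      unfold bw
      have hc : (ℓ - 1 - 1) * (2 * k) = 2 * k * (ℓ - 1 - 1) := Nat.mul_comm _ _
      have hd : 2 * k * (ℓ - 1 - 1) = 2 * k * (ℓ - 2) := by rw [show ℓ - 1 - 1 = ℓ - 2 by omega]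
      omega
    have hstepL : 2 * k * (ℓ - 1) = 2 * k * (ℓ - 2) + 2 * k := by
      have h := two_k_step k (ℓ - 1) (by omega)
      rw [show ℓ - 1 - 1 = ℓ - 2 by omega] at h
      exact h
    have hstepL2 : 2 * k * ℓ = 2 * k * (ℓ - 1) + 2 * k := two_k_step k ℓ (by omega)
    have hv5good : GoodSeq A k (fun t => bt5 k ℓ (2 * k - 1 - t)) (2 * k) := by
      intro t ht
      have h3 : (Finset.Icc t (t + k)).image (fun q => bt5 k ℓ (2 * k - 1 - q))
          = ((Finset.Icc t (t + k)).image (fun q => 2 * k - 1 - q)).image (bt5 k ℓ) := by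
        rw [Finset.image_image]; rfl
      rw [h3, image_rev_const t (t + k) (2 * k - 1) (by omega) (by omega),
        show 2 * k - 1 - t = (2 * k - 1 - (t + k)) + k by omega]
      exact hE5 _ (by omega)
    have hv5inj : Set.InjOn (fun t => bt5 k ℓ (2 * k - 1 - t)) ↑(Finset.range (2 * k)) := by
      intro a ha b hb h
      simp only [Finset.coe_range, Set.mem_Iio] at ha hb
      simp only [bt5] at h
      split_ifs at h with hc1 hc2 hc2
      · rw [hvalL _ (by omega), hvalL _ (by omega)] at h
        omega
      · have := bw_inj hk1 (by omega) (by omega) (by omega) (by omega) (by omega) (by omega) h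
        omega
      · have := bw_inj hk1 (by omega) (by omega) (by omega) (by omega) (by omega) (by omega) h
        omega
      · rw [hvalL1 _ (by omega), hvalL1 _ (by omega)] at h
        omega
    have hdis6 : ∀ q, k ≤ q → q < 2 * k →
        (fun t => bt5 k ℓ (2 * k - 1 - t)) q ∉ (Finset.range M).image u := by
      intro q hq1 hq2 hmem
      simp only [] at hmem
      rw [himg] at hmem
      have hval : bt5 k ℓ (2 * k - 1 - q) = bw k ℓ (q + 1) := by
        unfold bt5
        rw [if_pos (by omega)]
        congr 1
        omega
      rw [hval] at hmem
      rcases Finset.mem_union.1 hmem with hm1 | hm2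
      · have h1 := Finset.mem_range.1 (Finset.mem_sdiff.1 hm1).1
        rw [hvalL _ (by omega)] at h1
        omega
      · obtain ⟨j, hjIcc, hjv⟩ := Finset.mem_biUnion.1 hm2
        rw [Finset.mem_Icc] at hjIcc
        have hvlt : bw k ℓ (q + 1) < 2 * k * ℓ + 1 :=
          bw_lt_bound hk1 (by omega) (le_refl _) (by omega)
        rcases hfbb j (by omega) (by omega) _ hjv hvlt with ⟨a, ha, hae⟩ | ⟨a, ha, hae⟩
        · have := bw_inj hk1 (by omega) (by omega) (by omega) (by omega) (by omega) (by omega) hae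
          omega
        · have := bw_inj hk1 (by omega) (by omega) (by omega) (by omega) (by omega) (by omega) hae
          omega
    obtain ⟨w, hwl, hwg, hwi, hwim, hwe⟩ := glue_step (A := A) hk1
      (show 2 * k ≤ M from hM) (le_refl (2 * k)) hgood hv5good hinj hv5inj
      (fun j hj => by
        rw [hend j hj]
        show bw k (ℓ - 1) (2 * k - j) = bt5 k ℓ (2 * k - 1 - j)
        unfold bt5
        rw [if_neg (by omega)]
        congr 1
        omega) hdis6
    have hv5img : ∀ x, x ∈ (Finset.range (2 * k)).image (bt5 k ℓ) ↔
        ((2 * k * (ℓ - 1) + k + 1 ≤ x ∧ x ≤ 2 * k * (ℓ - 1) + 2 * k)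
          ∨ (2 * k * (ℓ - 2) + k + 1 ≤ x ∧ x ≤ 2 * k * (ℓ - 2) + 2 * k)) := by
      intro x
      simp only [Finset.mem_image, Finset.mem_range]
      constructor
      · rintro ⟨t, ht, rfl⟩
        by_cases htk : t < k
        · rw [show bt5 k ℓ t = bw k ℓ (2 * k - t) from by unfold bt5; rw [if_pos htk],
            hvalL _ (by omega)]
          left; omega
        · rw [show bt5 k ℓ t = bw k (ℓ - 1) (t + 1) from by unfold bt5; rw [if_neg htk],
            hvalL1 _ (by omega)]
          right; omega
      · rintro (⟨h1, h2⟩ | ⟨h1, h2⟩)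
        · refine ⟨2 * k * (ℓ - 1) + 2 * k - x, by omega, ?_⟩
          rw [show bt5 k ℓ (2 * k * (ℓ - 1) + 2 * k - x)
              = bw k ℓ (2 * k - (2 * k * (ℓ - 1) + 2 * k - x))
            from by unfold bt5; rw [if_pos (by omega)], hvalL _ (by omega)]
          omega
        · refine ⟨x - 2 * k * (ℓ - 2) - 1, by omega, ?_⟩
          rw [show bt5 k ℓ (x - 2 * k * (ℓ - 2) - 1)
              = bw k (ℓ - 1) (x - 2 * k * (ℓ - 2) - 1 + 1)
            from by unfold bt5; rw [if_neg (by omega)], hvalL1 _ (by omega)]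
          omega
    have hAv : A.verts = Finset.range (2 * k * ℓ + 1)
        ∪ (Finset.Icc 1 (ℓ - 1)).biUnion (fun i => (U i).verts) := rfl
    have himgF : (Finset.range (M + 2 * k - k)).image w = A.verts \ {0} := by
      rw [hwim, himg, image_comp_rev, hAv]
      ext x
      simp only [Finset.mem_union, Finset.mem_sdiff, Finset.mem_range, Finset.mem_singleton]
      rw [hv5img x]
      constructor
      · rintro ((⟨h1, h2⟩ | h) | (⟨h1, h2⟩ | ⟨h1, h2⟩))
        · exact ⟨Or.inl (by omega), h2⟩
        · refine ⟨Or.inr h, ?_⟩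
          obtain ⟨j, hjIcc, hjv⟩ := Finset.mem_biUnion.1 h
          rw [Finset.mem_Icc] at hjIcc
          intro h0
          exact h0U j (by omega) (by omega) (h0 ▸ hjv)
        · exact ⟨Or.inl (by omega), by omega⟩
        · exact ⟨Or.inl (by omega), by omega⟩
      · rintro ⟨h | h, h0⟩
        · by_cases hc1 : x < 2 * k * (ℓ - 1) + k + 1
          · exact Or.inl (Or.inl ⟨hc1, h0⟩)
          · exact Or.inr (Or.inl ⟨by omega, by omega⟩)
        · exact Or.inl (Or.inr h)
    have hwendF : ∀ j : Fin k, w (M + 2 * k - k - k + (j : ℕ)) = bw k ℓ (k + 1 + (j : ℕ)) := by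
      intro j
      rw [show M + 2 * k - k - k + (j : ℕ) = M + 2 * k - 2 * k + (j : ℕ) by omega,
        hwe j j.isLt]
      show bt5 k ℓ (2 * k - 1 - (2 * k - k + (j : ℕ))) = _
      unfold bt5
      rw [if_pos (by omega)]
      congr 1
      omega
    obtain ⟨P, hc, hv⟩ := build_copy A k (M + 2 * k - k) w
      (fun a : Fin k => bw k 1 (1 + (a : ℕ))) (fun a : Fin k => bw k ℓ (k + 1 + (a : ℕ)))
      hk1 (by omega) hwg hwi
      (by rw [himgF]; exact Finset.sdiff_subset)
      (fun j => by rw [hwl j (by omega)]; exact hstart j j.isLt) hwendF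
    exact ⟨M + 2 * k - k, by omega, P, hc, by rw [hv, himgF]⟩
end

section
/- Let k ≥ 2 and ℓ ≥ 2k + 1 be integers and let u = (u_1,…,u_k, u_{ℓ−k+1},…,u_ℓ) be the 2k-tuple consisting of the first k and last k vertices of the (k,ℓ)-connecting-path CP^k_ℓ. If F' ⊆ CP^k_ℓ is a subgraph with e(F') > 0 whose vertex set is disjoint from the entries of u, then e(F') ≤ k·(v(F') − 1). -/
open MeasureTheory Finset

/-- A subgraph of `CP^k_ℓ` avoiding the end tuples has at most `k (v - 1)` edges. -/
theorem connPath_subgraph_edges (k ℓ : ℕ) (hk : 2 ≤ k) (hℓ : 2 * k + 1 ≤ ℓ)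
    (F' : FinHypergraph ℕ) (hsub : F'.IsSub (connPath k ℓ)) (hwf : F'.Wf)
    (he : 0 < F'.ecount) (hdisj : ∀ j : Fin (k + k), endsTuple k ℓ j ∉ F'.verts) :
    F'.ecount ≤ k * (F'.vcount - 1) := by
  classical
  have hedge : ∀ e ∈ F'.edges, ∃ i j : ℕ, i < j ∧ j ≤ i + k ∧ e = {i, j} := by
    intro e he'
    have := hsub.2 he'
    simp only [connPath, Finset.mem_image, Finset.mem_filter, Finset.mem_product,
      Finset.mem_range, Prod.exists] at this
    obtain ⟨a, b, ⟨⟨_, _⟩, h1, h2, _⟩, rfl⟩ := this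
    exact ⟨a, b, h1, h2, rfl⟩
  have hvne : F'.verts.Nonempty := by
    obtain ⟨e, he'⟩ := Finset.card_pos.mp he
    obtain ⟨i, j, hij, _, rfl⟩ := hedge e he'
    exact ⟨i, hwf _ he' (by simp)⟩
  set m := F'.verts.min' hvne with hm
  set f : Finset ℕ → ℕ × ℕ :=
    fun e => (e.sup id, e.sup id - (e.erase (e.sup id)).sup id - 1) with hf
  have key : ∀ (i j : ℕ), i < j → f {i, j} = (j, j - i - 1) := by
    intro i j hij
    have hsup : ({i, j} : Finset ℕ).sup id = j := by
      simp [Finset.sup_insert, sup_eq_right.mpr hij.le]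
    have herase : ({i, j} : Finset ℕ).erase j = {i} := by
      rw [Finset.pair_comm, Finset.erase_insert (by simp [hij.ne'])]
    simp [hf, hsup, herase]
  have hcard : F'.ecount ≤ ((F'.verts.erase m) ×ˢ Finset.range k).card := by
    apply Finset.card_le_card_of_injOn f
    · intro e he'
      obtain ⟨i, j, hij, hjk, rfl⟩ := hedge e he'
      rw [key i j hij]
      have hi : i ∈ F'.verts := hwf _ he' (by simp)
      have hj : j ∈ F'.verts := hwf _ he' (by simp)
      have hmi : m ≤ i := F'.verts.min'_le i hi
      simp only [Finset.mem_coe, Finset.mem_product, Finset.mem_erase, Finset.mem_range]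
      exact ⟨⟨by omega, hj⟩, by omega⟩
    · intro e1 h1 e2 h2 hfe
      obtain ⟨i1, j1, hij1, _, rfl⟩ := hedge e1 h1
      obtain ⟨i2, j2, hij2, _, rfl⟩ := hedge e2 h2
      rw [key i1 j1 hij1, key i2 j2 hij2] at hfe
      simp only [Prod.mk.injEq] at hfe
      obtain ⟨hj, hd⟩ := hfe
      have : i1 = i2 ∧ j1 = j2 := by omega
      rw [this.1, this.2]
  have hprod : ((F'.verts.erase m) ×ˢ Finset.range k).card = (F'.vcount - 1) * k := by
    rw [Finset.card_product, Finset.card_erase_of_mem (F'.verts.min'_mem hvne),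
      Finset.card_range]
    rfl
  rw [hprod, mul_comm] at hcard
  exact hcard
end
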